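/- arXiv:1407.7053 — 3 statements merged into one kernel-verified Lean document; each statement's English description precedes it below -/
import Mathlib

section
/- Let θ > 0, κ > 0, Δ₀ > κ, and suppose Δ solves Δ' = -θΔ + Ψ with continuous Ψ satisfying -Ψ_U ≤ Ψ ≤ -Ψ_L where 0 < Ψ_L ≤ Ψ_U. Let T₁ be the first time Δ(t) = κ. Then T₁ exists, is unique, and satisfies (1/θ) log((θΔ₀ + Ψ_U)/(θκ + Ψ_U)) ≤ T₁ ≤ (1/θ) log((θΔ₀ + Ψ_L)/(θκ + Ψ_L)). -/
open Real

private lemma mono_aux (f f' : ℝ → ℝ)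
    (hf : ∀ t, 0 ≤ t → HasDerivAt f (f' t) t)
    (h0 : ∀ t, 0 < t → 0 ≤ f' t) :
    ∀ t, 0 ≤ t → f 0 ≤ f t := by
  have hmono : MonotoneOn f (Set.Ici 0) := by
    apply monotoneOn_of_deriv_nonneg (convex_Ici 0)
    · exact fun t ht => (hf t ht).continuousAt.continuousWithinAt
    · intro t ht
      rw [interior_Ici] at ht
      exact (hf t (le_of_lt ht)).differentiableAt.differentiableWithinAt
    · intro t ht
      rw [interior_Ici] at ht
      rw [(hf t ht.le).deriv]
      exact h0 t ht
  exact fun t ht => hmono Set.self_mem_Ici ht ht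

theorem stmt_4 (θ κ Δ₀ ΨL ΨU : ℝ) (Ψ Δ : ℝ → ℝ)
    (hθ : 0 < θ) (hκ : 0 < κ) (hΔ₀ : κ < Δ₀)
    (hΨL : 0 < ΨL) (hLU : ΨL ≤ ΨU)
    (hΨc : ContinuousOn Ψ (Set.Ici 0))
    (hΨbd : ∀ t, 0 ≤ t → -ΨU ≤ Ψ t ∧ Ψ t ≤ -ΨL)
    (hode : ∀ t, 0 ≤ t → HasDerivAt Δ (-θ * Δ t + Ψ t) t)
    (hinit : Δ 0 = Δ₀) :
    ∃ T₁ : ℝ, (0 ≤ T₁ ∧ Δ T₁ = κ) ∧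
      (∀ T', 0 ≤ T' → Δ T' = κ → T' = T₁) ∧
      (1 / θ) * Real.log ((θ * Δ₀ + ΨU) / (θ * κ + ΨU)) ≤ T₁ ∧
      T₁ ≤ (1 / θ) * Real.log ((θ * Δ₀ + ΨL) / (θ * κ + ΨL)) := by
  have hθ' : θ ≠ 0 := ne_of_gt hθ
  have hΨU : 0 < ΨU := lt_of_lt_of_le hΨL hLU
  have hΔ₀pos : 0 < Δ₀ := lt_trans hκ hΔ₀
  -- derivative of exp (θ t)
  have hEd : ∀ t : ℝ, HasDerivAt (fun s => Real.exp (θ * s)) (θ * Real.exp (θ * t)) t := by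
    intro t
    have h1 : HasDerivAt (fun s : ℝ => θ * s) θ t := by
      simpa using (hasDerivAt_id t).const_mul θ
    simpa [mul_comm] using h1.exp
  -- derivative of g t = exp (θ t) * Δ t
  have hg : ∀ t, 0 ≤ t → HasDerivAt (fun s => Real.exp (θ * s) * Δ s)
      (Real.exp (θ * t) * Ψ t) t := by
    intro t ht
    have h : HasDerivAt (fun s => Real.exp (θ * s) * Δ s) _ t := (hEd t).mul (hode t ht)
    convert h using 1
    ring
  -- upper bound: θ (exp(θt) Δ t) ≤ θ Δ₀ - ΨL (exp(θt)-1)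
  have hub : ∀ t, 0 ≤ t →
      θ * (Real.exp (θ * t) * Δ t) ≤ θ * Δ₀ - ΨL * (Real.exp (θ * t) - 1) := by
    intro t ht
    have hd : ∀ s, 0 ≤ s → HasDerivAt
        (fun u => θ * Δ₀ - ΨL * (Real.exp (θ * u) - 1) - θ * (Real.exp (θ * u) * Δ u))
        (θ * Real.exp (θ * s) * (-ΨL - Ψ s)) s := by
      intro s hs
      have h1 := ((hEd s).sub_const 1).const_mul ΨL
      have h2 := (hg s hs).const_mul θ
      have h3 : HasDerivAt
          (fun u => θ * Δ₀ - ΨL * (Real.exp (θ * u) - 1) - θ * (Real.exp (θ * u) * Δ u)) _ s :=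
        ((hasDerivAt_const s (θ * Δ₀)).sub h1).sub h2
      convert h3 using 1
      ring
    have hd0 : ∀ s, 0 < s → 0 ≤ θ * Real.exp (θ * s) * (-ΨL - Ψ s) := by
      intro s hs
      have h := (hΨbd s hs.le).2
      have hE := Real.exp_pos (θ * s)
      exact mul_nonneg (mul_pos hθ hE).le (by linarith)
    have key := mono_aux _ _ (fun s hs => hd s hs) hd0 t ht
    simp [hinit] at key
    linarith
  -- lower bound: θ Δ₀ - ΨU (exp(θt)-1) ≤ θ (exp(θt) Δ t)
  have hlb : ∀ t, 0 ≤ t →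
      θ * Δ₀ - ΨU * (Real.exp (θ * t) - 1) ≤ θ * (Real.exp (θ * t) * Δ t) := by
    intro t ht
    have hd : ∀ s, 0 ≤ s → HasDerivAt
        (fun u => θ * (Real.exp (θ * u) * Δ u) - (θ * Δ₀ - ΨU * (Real.exp (θ * u) - 1)))
        (θ * Real.exp (θ * s) * (ΨU + Ψ s)) s := by
      intro s hs
      have h1 := ((hEd s).sub_const 1).const_mul ΨU
      have h2 := (hg s hs).const_mul θ
      have h3 : HasDerivAt
          (fun u => θ * (Real.exp (θ * u) * Δ u) - (θ * Δ₀ - ΨU * (Real.exp (θ * u) - 1))) _ s :=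
        h2.sub ((hasDerivAt_const s (θ * Δ₀)).sub h1)
      convert h3 using 1
      ring
    have hd0 : ∀ s, 0 < s → 0 ≤ θ * Real.exp (θ * s) * (ΨU + Ψ s) := by
      intro s hs
      have h := (hΨbd s hs.le).1
      have hE := Real.exp_pos (θ * s)
      exact mul_nonneg (mul_pos hθ hE).le (by linarith)
    have key := mono_aux _ _ (fun s hs => hd s hs) hd0 t ht
    simp [hinit] at key
    linarith
  -- g is strictly decreasing on [0, ∞)
  have hanti : StrictAntiOn (fun s => Real.exp (θ * s) * Δ s) (Set.Ici 0) := by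
    apply strictAntiOn_of_deriv_neg (convex_Ici 0)
    · exact fun t ht => (hg t ht).continuousAt.continuousWithinAt
    · intro t ht
      rw [interior_Ici] at ht
      rw [(hg t (le_of_lt ht)).deriv]
      have h := (hΨbd t (le_of_lt ht)).2
      have hE := Real.exp_pos (θ * t)
      nlinarith
  -- existence: at t₀ := log a / θ with a = 1 + θΔ₀/ΨL, Δ t₀ ≤ 0
  obtain ⟨a, ha⟩ : ∃ a : ℝ, a = 1 + θ * Δ₀ / ΨL := ⟨_, rfl⟩
  have ha1 : 1 < a := by
    rw [ha]
    have : 0 < θ * Δ₀ / ΨL := by positivity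
    linarith
  have hapos : 0 < a := by linarith
  obtain ⟨t₀, ht₀def⟩ : ∃ t₀ : ℝ, t₀ = Real.log a / θ := ⟨_, rfl⟩
  have ht₀ : 0 ≤ t₀ := by
    rw [ht₀def]
    have : 0 ≤ Real.log a := Real.log_nonneg ha1.le
    positivity
  have hEt₀ : Real.exp (θ * t₀) = a := by
    rw [ht₀def, show θ * (Real.log a / θ) = Real.log a by field_simp]
    exact Real.exp_log hapos
  have hΔt₀ : Δ t₀ ≤ 0 := by
    have h := hub t₀ ht₀
    rw [hEt₀] at h
    have hcanc : ΨL * (a - 1) = θ * Δ₀ := by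
      rw [ha]; field_simp; ring
    nlinarith [mul_pos hθ hapos]
  -- IVT gives T with Δ T = κ
  have hcont : ContinuousOn Δ (Set.Icc 0 t₀) := fun t ht =>
    (hode t ht.1).continuousAt.continuousWithinAt
  have hκmem : κ ∈ Set.Icc (Δ t₀) (Δ 0) := ⟨by linarith, by rw [hinit]; linarith⟩
  obtain ⟨T, hT, hTκ⟩ := intermediate_value_Icc' ht₀ hcont hκmem
  have hT0 : (0:ℝ) ≤ T := hT.1
  -- uniqueness
  have huniq : ∀ T', 0 ≤ T' → Δ T' = κ → T' = T := by
    intro T' hT' hT'κ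
    by_contra hne
    rcases lt_or_gt_of_ne hne with h | h
    · have hlt : Real.exp (θ * T) * Δ T < Real.exp (θ * T') * Δ T' :=
        hanti (Set.mem_Ici.mpr hT') (Set.mem_Ici.mpr hT0) h
      rw [hTκ, hT'κ] at hlt
      have he : Real.exp (θ * T') < Real.exp (θ * T) :=
        Real.exp_lt_exp.mpr (by nlinarith)
      nlinarith
    · have hlt : Real.exp (θ * T') * Δ T' < Real.exp (θ * T) * Δ T :=
        hanti (Set.mem_Ici.mpr hT0) (Set.mem_Ici.mpr hT') h
      rw [hTκ, hT'κ] at hlt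
      have he : Real.exp (θ * T) < Real.exp (θ * T') :=
        Real.exp_lt_exp.mpr (by nlinarith)
      nlinarith
  -- bounds on T
  have hgT := hub T hT0
  rw [hTκ] at hgT
  have hgT' := hlb T hT0
  rw [hTκ] at hgT'
  have hpos1 : 0 < θ * κ + ΨL := by positivity
  have hpos2 : 0 < θ * κ + ΨU := by positivity
  have hposN2 : 0 < θ * Δ₀ + ΨU := by positivity
  have hET1 : Real.exp (θ * T) * (θ * κ + ΨL) ≤ θ * Δ₀ + ΨL := by nlinarith
  have hET2 : θ * Δ₀ + ΨU ≤ Real.exp (θ * T) * (θ * κ + ΨU) := by nlinarith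
  have hET1' : Real.exp (θ * T) ≤ (θ * Δ₀ + ΨL) / (θ * κ + ΨL) :=
    (le_div_iff₀ hpos1).mpr hET1
  have hET2' : (θ * Δ₀ + ΨU) / (θ * κ + ΨU) ≤ Real.exp (θ * T) :=
    (div_le_iff₀ hpos2).mpr (by linarith)
  have hlog1 : θ * T ≤ Real.log ((θ * Δ₀ + ΨL) / (θ * κ + ΨL)) := by
    calc θ * T = Real.log (Real.exp (θ * T)) := (Real.log_exp _).symm
    _ ≤ _ := Real.log_le_log (Real.exp_pos _) hET1'
  have hlog2 : Real.log ((θ * Δ₀ + ΨU) / (θ * κ + ΨU)) ≤ θ * T := by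
    calc Real.log ((θ * Δ₀ + ΨU) / (θ * κ + ΨU))
        ≤ Real.log (Real.exp (θ * T)) := Real.log_le_log (by positivity) hET2'
    _ = θ * T := Real.log_exp _
  refine ⟨T, ⟨hT0, hTκ⟩, huniq, ?_, ?_⟩
  · have h := mul_le_mul_of_nonneg_left hlog2 (by positivity : (0:ℝ) ≤ 1 / θ)
    calc (1 / θ) * Real.log ((θ * Δ₀ + ΨU) / (θ * κ + ΨU)) ≤ (1 / θ) * (θ * T) := h
    _ = T := by field_simp
  · have h := mul_le_mul_of_nonneg_left hlog1 (by positivity : (0:ℝ) ≤ 1 / θ)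
    calc T = (1 / θ) * (θ * T) := by field_simp
    _ ≤ (1 / θ) * Real.log ((θ * Δ₀ + ΨL) / (θ * κ + ΨL)) := h
end

section
/- In the first interval of the switching fluid model (with θ < μ < 1, 0 < τ, z₀ = z_{2,1}(0) ∈ [0,1]), the explicit solution of q₂'(t) = (λ-1-μ) - θ q₂(t) - (1-μ)(1-z₀)e^{-t} + (1-μ)τ e^{-μt} with q₂(0) given is q₂(t) = q₂(0)e^{-θt} + ((λ-1-μ)/θ)(1-e^{-θt}) - ((1-μ)(1-z₀)/(1-θ))(e^{-θt}-e^{-t}) + ((1-μ)τ/(μ-θ))(e^{-θt}-e^{-μt}). -/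
open Real

theorem stmt_10 (lam θ μ τ z₀ : ℝ) (q₂ : ℝ → ℝ)
    (hθ : 0 < θ) (hθμ : θ < μ) (hμ1 : μ < 1) (hτ : 0 < τ)
    (hz₀ : 0 ≤ z₀) (hz₀1 : z₀ ≤ 1)
    (hode : ∀ t, 0 ≤ t →
      HasDerivAt q₂
        ((lam - 1 - μ) - θ * q₂ t - (1 - μ) * (1 - z₀) * Real.exp (-t)
          + (1 - μ) * τ * Real.exp (-μ * t)) t) :
    ∀ t, 0 ≤ t →
      q₂ t = q₂ 0 * Real.exp (-θ * t)
        + ((lam - 1 - μ) / θ) * (1 - Real.exp (-θ * t))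
        - ((1 - μ) * (1 - z₀) / (1 - θ)) * (Real.exp (-θ * t) - Real.exp (-t))
        + ((1 - μ) * τ / (μ - θ)) * (Real.exp (-θ * t) - Real.exp (-μ * t)) := by
  have hθ0 : θ ≠ 0 := ne_of_gt hθ
  have h1θ : (1:ℝ) - θ ≠ 0 := by nlinarith
  have hμθ : μ - θ ≠ 0 := by nlinarith
  set F : ℝ → ℝ := fun s => q₂ 0 * Real.exp (-θ * s)
        + ((lam - 1 - μ) / θ) * (1 - Real.exp (-θ * s))
        - ((1 - μ) * (1 - z₀) / (1 - θ)) * (Real.exp (-θ * s) - Real.exp (-s))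
        + ((1 - μ) * τ / (μ - θ)) * (Real.exp (-θ * s) - Real.exp (-μ * s)) with hFdef
  have hFd : ∀ s : ℝ, HasDerivAt F
      ((lam - 1 - μ) - θ * F s - (1 - μ) * (1 - z₀) * Real.exp (-s)
        + (1 - μ) * τ * Real.exp (-μ * s)) s := by
    intro s
    have e1 : HasDerivAt (fun s : ℝ => Real.exp (-θ * s)) (-θ * Real.exp (-θ * s)) s := by
      simpa [mul_comm] using ((hasDerivAt_id s).const_mul (-θ)).exp
    have e2 : HasDerivAt (fun s : ℝ => Real.exp (-s)) (-Real.exp (-s)) s := by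
      simpa using (hasDerivAt_id s).neg.exp
    have e3 : HasDerivAt (fun s : ℝ => Real.exp (-μ * s)) (-μ * Real.exp (-μ * s)) s := by
      simpa [mul_comm] using ((hasDerivAt_id s).const_mul (-μ)).exp
    have H := (((e1.const_mul (q₂ 0)).add
        ((e1.const_sub 1).const_mul ((lam - 1 - μ) / θ))).sub
        ((e1.sub e2).const_mul ((1 - μ) * (1 - z₀) / (1 - θ)))).add
        ((e1.sub e3).const_mul ((1 - μ) * τ / (μ - θ)))
    refine H.congr_deriv ?_
    simp only [hFdef]
    field_simp
    ring
  have hgd : ∀ x : ℝ, HasDerivAt (fun s => (q₂ s - F s) * Real.exp (θ * s)) 0 x ∨ True := fun _ => Or.inr trivial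
  intro t ht
  have hgd' : ∀ x, 0 ≤ x → HasDerivAt (fun s => (q₂ s - F s) * Real.exp (θ * s)) 0 x := by
    intro x hx
    have h1 := (hode x hx).sub (hFd x)
    have h2 : HasDerivAt (fun s : ℝ => Real.exp (θ * s)) (θ * Real.exp (θ * x)) x := by
      simpa [mul_comm] using ((hasDerivAt_id x).const_mul θ).exp
    have := h1.mul h2
    refine this.congr_deriv ?_
    rw [Pi.sub_apply]
    ring
  have hcont : ContinuousOn (fun s => (q₂ s - F s) * Real.exp (θ * s)) (Set.Icc 0 t) :=
    fun x hx => ((hgd' x hx.1).continuousAt).continuousWithinAt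
  have hconst := constant_of_has_deriv_right_zero hcont
    (fun x hx => (hgd' x hx.1).hasDerivWithinAt) t ⟨ht, le_refl t⟩
  have hF0 : F 0 = q₂ 0 := by simp [hFdef]
  have hexp : Real.exp (θ * t) ≠ 0 := Real.exp_ne_zero _
  have : (q₂ t - F t) * Real.exp (θ * t) = 0 := by
    rw [hconst]; simp [hF0]
  have hq : q₂ t - F t = 0 := by
    rcases mul_eq_zero.mp this with h | h
    · exact h
    · exact absurd h hexp
  have := sub_eq_zero.mp hq
  simpa [hFdef] using this
end

section
/- Let 0 < μ < 1, κ > 0, τ ∈ (0,1) with 1 - μ > -log(1-τ). Define ε := -log(1-τ) > 0. If κ < Δ ≤ κ + ε and T > 0 satisfies T = (Δ - 1 + μ - κ)/(1+μ) + ((1-μ)/(1+μ)) e^{-T}, then T < ε, and consequently the next-cycle difference 𝒯(Δ) := (1-μ)(1 - e^{-T} - τ)/μ - κ satisfies 𝒯(Δ) < 0. -/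
open Real

theorem stmt_14 (μ κ τ Δ T : ℝ)
    (hμ : 0 < μ) (hμ1 : μ < 1) (hκ : 0 < κ) (hτ : 0 < τ) (hτ1 : τ < 1)
    (hμτ : -Real.log (1 - τ) < 1 - μ)
    (hΔ : κ < Δ) (hΔ' : Δ ≤ κ + (-Real.log (1 - τ)))
    (hT : 0 < T)
    (heq : T = (Δ - 1 + μ - κ) / (1 + μ) + ((1 - μ) / (1 + μ)) * Real.exp (-T)) :
    T < -Real.log (1 - τ) ∧
    (1 - μ) * (1 - Real.exp (-T) - τ) / μ - κ < 0 := by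
  set ε := -Real.log (1 - τ) with hεdef
  have h1τ : (0:ℝ) < 1 - τ := by linarith
  have hε : Real.exp (-ε) = 1 - τ := by
    rw [hεdef, neg_neg]; exact Real.exp_log h1τ
  have hεpos : 0 < ε := by
    have := Real.log_neg h1τ (by linarith)
    simp [hεdef]; linarith
  have h1μ : (0:ℝ) < 1 + μ := by linarith
  have heq' : (1 + μ) * T = Δ - 1 + μ - κ + (1 - μ) * Real.exp (-T) := by
    field_simp at heq; linarith
  have hTε : T < ε := by
    by_contra h
    push_neg at h
    have hexp : Real.exp (-T) ≤ Real.exp (-ε) := Real.exp_le_exp.mpr (by linarith)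
    rw [hε] at hexp
    nlinarith
  refine ⟨hTε, ?_⟩
  have hexp : Real.exp (-ε) < Real.exp (-T) := Real.exp_lt_exp.mpr (by linarith)
  rw [hε] at hexp
  have hneg : (1 - μ) * (1 - Real.exp (-T) - τ) < 0 := by nlinarith
  have := div_neg_of_neg_of_pos hneg hμ
  linarith
end
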